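/- Let s > 0 and a ∈ (0,1). The ordinary differential equation y'(t) = s y(t)(1−y(t))/(1 + s(1−y(t))) with y(0) = a admits a unique solution (y_t)_{t≥0} with values in [0,1]; this solution satisfies y_t ∈ (0,1) for all t ≥ 0, satisfies y_t^{1+s}/(1−y_t) = (a^{1+s}/(1−a)) e^{st} for all t ≥ 0 (equivalently y_t = F^{-1}((a^{1+s}/(1−a)) e^{st}) where F(x) = x^{1+s}/(1−x)), is strictly increasing in t, and converges to 1 as t → ∞. -/

import Mathlib

/-!
For `x ∈ (0,1)`, `log F(x) = (1+s) log x - log (1-x)` has derivative `(1 + s(1-x)) / (x(1-x))`,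
which is `s` divided by the right-hand side of the equation; so the equation reads
`(log F(y))' = s`, and `y_t = (log F)⁻¹(log F(a) + s t)` is a solution.

Conversely, for any `[0,1]`-valued solution the defect `y^{1+s} - F(a) e^{st} (1-y)` vanishes at
`t = 0` and solves the linear equation `D' = s(1+s)(1-y)/(1+s(1-y)) · D`, whose coefficient is
bounded by `s(1+s)`; by Grönwall it vanishes identically. This identity rules out the values
`0` and `1`, and then `F(y_t) = F(a) e^{st}` with `F` strictly increasing gives uniqueness,
strict monotonicity and `y_t → 1`.
-/

open Filter

/-- A solution on `[0,∞)`, with values in `[0,1]`, of the ordinary differential equation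
`y' = s y (1−y) / (1 + s(1−y))` with initial condition `y(0) = a`. -/
def IsSolY (s a : ℝ) (y : ℝ → ℝ) : Prop :=
  y 0 = a ∧ ∀ t ∈ Set.Ici (0 : ℝ),
    y t ∈ Set.Icc (0 : ℝ) 1 ∧
    HasDerivWithinAt y (s * y t * (1 - y t) / (1 + s * (1 - y t))) (Set.Ici 0) t

open Set Topology

namespace LogisticODE

variable {s x : ℝ}

noncomputable def F (s x : ℝ) : ℝ := x ^ (1 + s) / (1 - x)

theorem strictMonoOn_F (hs : 0 ≤ 1 + s) : StrictMonoOn (F s) (Ico 0 1) := by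
  intro x hx y hy hxy
  have hy0 : 0 < y := hx.1.trans_lt hxy
  calc x ^ (1 + s) / (1 - x) ≤ y ^ (1 + s) / (1 - x) := by
        gcongr <;> linarith [hx.1, hx.2]
    _ < y ^ (1 + s) / (1 - y) := by
        have := Real.rpow_pos_of_pos hy0 (1 + s)
        gcongr
        linarith [hy.2]

theorem F_pos (hx : x ∈ Ioo 0 1) : 0 < F s x :=
  div_pos (Real.rpow_pos_of_pos hx.1 _) (sub_pos.2 hx.2)

noncomputable def logF (s x : ℝ) : ℝ := (1 + s) * Real.log x - Real.log (1 - x)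

theorem hasDerivAt_logF (hx : x ∈ Ioo 0 1) :
    HasDerivAt (logF s) ((1 + s * (1 - x)) / (x * (1 - x))) x := by
  have hx0 : x ≠ 0 := hx.1.ne'
  have h1x : 1 - x ≠ 0 := by linarith [hx.2]
  have hlog : HasDerivAt (fun x => Real.log (1 - x)) ((1 - x)⁻¹ * (-1)) x :=
    (Real.hasDerivAt_log h1x).comp x ((hasDerivAt_id x).const_sub 1)
  refine (((Real.hasDerivAt_log hx0).const_mul (1 + s)).sub hlog).congr_deriv ?_
  field_simp
  ring

theorem strictMonoOn_logF (hs : 0 ≤ 1 + s) : StrictMonoOn (logF s) (Ioo 0 1) := by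
  intro x hx y hy hxy
  have hlog : Real.log x ≤ Real.log y := Real.log_le_log hx.1 hxy.le
  have hlog1 : Real.log (1 - y) < Real.log (1 - x) :=
    Real.log_lt_log (by linarith [hy.2]) (by linarith)
  unfold logF
  nlinarith

theorem tendsto_logF_nhdsGT_zero (hs : 0 < 1 + s) : Tendsto (logF s) (𝓝[>] 0) atBot := by
  have hlog1 : Tendsto (fun x : ℝ => Real.log (1 - x)) (𝓝[>] 0) (𝓝 0) := by
    have : ContinuousAt (fun x : ℝ => Real.log (1 - x)) 0 :=
      (continuousAt_const.sub continuousAt_id).log (by norm_num)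
    simpa using this.tendsto.mono_left nhdsWithin_le_nhds
  exact ((Real.tendsto_log_nhdsGT_zero.const_mul_atBot hs).atBot_add hlog1.neg).congr
    fun x => (sub_eq_add_neg _ _).symm

theorem tendsto_logF_nhdsLT_one : Tendsto (logF s) (𝓝[<] 1) atTop := by
  have hlog : Tendsto (fun x : ℝ => (1 + s) * Real.log x) (𝓝[<] 1) (𝓝 0) := by
    have : ContinuousAt (fun x : ℝ => (1 + s) * Real.log x) 1 :=
      continuousAt_const.mul (Real.continuousAt_log one_ne_zero)
    simpa using this.tendsto.mono_left nhdsWithin_le_nhds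
  have hsub : Tendsto (fun x : ℝ => 1 - x) (𝓝[<] 1) (𝓝[>] 0) := by
    refine tendsto_nhdsWithin_iff.2
      ⟨?_, eventually_nhdsWithin_of_forall fun x hx => mem_Ioi.2 (sub_pos.2 hx)⟩
    exact ((continuous_sub_left 1).tendsto' 1 0 (sub_self 1)).mono_left nhdsWithin_le_nhds
  exact (hlog.add_atTop (tendsto_neg_atBot_atTop.comp
    (Real.tendsto_log_nhdsGT_zero.comp hsub))).congr fun x => (sub_eq_add_neg _ _).symm

theorem continuousOn_logF : ContinuousOn (logF s) (Ioo 0 1) :=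
  fun _ hx => (hasDerivAt_logF hx).continuousAt.continuousWithinAt

theorem surjOn_logF (hs : 0 < 1 + s) : SurjOn (logF s) (Ioo 0 1) univ :=
  continuousOn_logF.surjOn_of_tendsto (nonempty_Ioo.2 one_pos)
    (by rw [tendsto_comp_coe_Ioo_atBot one_pos]; exact tendsto_logF_nhdsGT_zero hs)
    (by rw [tendsto_comp_coe_Ioo_atTop one_pos]; exact tendsto_logF_nhdsLT_one)

noncomputable def logFOrderIso (hs : 0 < 1 + s) : Ioo (0 : ℝ) 1 ≃o ℝ :=
  ((strictMonoOn_logF hs.le).orderIso _ _).trans <|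
    (OrderIso.setCongr _ _ (univ_subset_iff.1 (surjOn_logF hs))).trans OrderIso.Set.univ

theorem hasDerivAt_logFOrderIso_symm (hs : 0 < 1 + s) (u : ℝ) :
    HasDerivAt (fun u => ((logFOrderIso hs).symm u : ℝ))
      ((logFOrderIso hs).symm u * (1 - (logFOrderIso hs).symm u) /
        (1 + s * (1 - (logFOrderIso hs).symm u))) u := by
  set e := logFOrderIso hs
  obtain ⟨hx0, hx1⟩ := (e.symm u).2
  have hpos : 0 < 1 + s * (1 - e.symm u) := by nlinarith
  have hcont : ContinuousAt (fun u => (e.symm u : ℝ)) u :=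
    (continuous_subtype_val.comp e.symm.continuous).continuousAt
  have h := HasDerivAt.of_local_left_inverse hcont (hasDerivAt_logF (e.symm u).2)
    (div_pos hpos (by nlinarith)).ne' (Eventually.of_forall e.apply_symm_apply)
  rwa [inv_div] at h

theorem exists_isSolY {a : ℝ} (hs : -1 < s) (ha : a ∈ Ioo 0 1) : ∃ y, IsSolY s a y := by
  have hs' : 0 < 1 + s := by linarith
  set e := logFOrderIso hs'
  refine ⟨fun t => e.symm (logF s a + s * t), ?_, fun t _ => ⟨?_, ?_⟩⟩
  · simp only [mul_zero, add_zero]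
    exact congrArg Subtype.val (e.symm_apply_apply ⟨a, ha⟩)
  · exact Ioo_subset_Icc_self (e.symm _).2
  · refine ((hasDerivAt_logFOrderIso_symm hs' _).comp t
      (((hasDerivAt_id' t).const_mul s).const_add _)).hasDerivWithinAt.congr_deriv ?_
    ring

end LogisticODE

namespace IsSolY

open LogisticODE

variable {s a : ℝ} {y : ℝ → ℝ} {t : ℝ}

theorem hasDerivWithinAt_defect (hs : 0 ≤ s) (hy : IsSolY s a y) (K : ℝ) (ht : t ∈ Ici 0) :
    HasDerivWithinAt (fun t => y t ^ (1 + s) - K * Real.exp (s * t) * (1 - y t))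
      (s * (1 + s) * (1 - y t) / (1 + s * (1 - y t)) *
        (y t ^ (1 + s) - K * Real.exp (s * t) * (1 - y t))) (Ici 0) t := by
  obtain ⟨⟨hy0, hy1⟩, hd⟩ := hy.2 t ht
  have hpow :=
    (Real.hasDerivAt_rpow_const (p := 1 + s) (Or.inr (by linarith))).comp_hasDerivWithinAt t hd
  have hexp : HasDerivWithinAt (fun t => K * Real.exp (s * t))
      (K * (Real.exp (s * t) * (s * 1))) (Ici 0) t :=
    (((hasDerivAt_id' t).const_mul s).exp.const_mul K).hasDerivWithinAt
  refine (hpow.sub (hexp.mul (hd.const_sub 1))).congr_deriv ?_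
  have hD : 0 < 1 + s * (1 - y t) := by nlinarith
  rw [add_sub_cancel_left, Real.rpow_add' hy0 (by linarith), Real.rpow_one]
  field_simp
  ring

theorem rpow_eq_mul_one_sub (hs : 0 ≤ s) (ha : a ≠ 1) (hy : IsSolY s a y) (ht : t ∈ Ici 0) :
    y t ^ (1 + s) = F s a * Real.exp (s * t) * (1 - y t) := by
  have hcoef : ∀ u ∈ Ici (0 : ℝ),
      |s * (1 + s) * (1 - y u) / (1 + s * (1 - y u))| ≤ s * (1 + s) := by
    intro u hu
    obtain ⟨hy0, hy1⟩ := (hy.2 u hu).1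
    have hD : 0 < 1 + s * (1 - y u) := by nlinarith
    rw [abs_of_nonneg (by positivity), div_le_iff₀ hD]
    exact mul_le_mul_of_nonneg_left (by nlinarith) (by positivity)
  have h0 : a ^ (1 + s) - F s a * Real.exp (s * 0) * (1 - a) = 0 := by
    rw [F, mul_zero, Real.exp_zero, mul_one, div_mul_cancel₀ _ (sub_ne_zero.2 ha.symm), sub_self]
  refine sub_eq_zero.1 <| eq_zero_of_abs_deriv_le_mul_abs_self_of_eq_zero_right (K := s * (1 + s))
    (fun u hu => ((hy.hasDerivWithinAt_defect hs _ hu.1).continuousWithinAt).mono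
      Icc_subset_Ici_self)
    (fun u hu => (hy.hasDerivWithinAt_defect hs _ hu.1).mono (Ici_subset_Ici.2 hu.1))
    (by rw [hy.1]; exact h0) (fun u hu => ?_) t ⟨ht, le_rfl⟩
  rw [norm_mul, Real.norm_eq_abs]
  exact mul_le_mul_of_nonneg_right (hcoef u hu.1) (norm_nonneg _)

theorem mem_Ioo (hs : 0 ≤ s) (ha : a ∈ Ioo 0 1) (hy : IsSolY s a y) (ht : t ∈ Ici 0) :
    y t ∈ Ioo 0 1 := by
  have hK : 0 < F s a * Real.exp (s * t) := mul_pos (F_pos ha) (Real.exp_pos _)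
  have h := hy.rpow_eq_mul_one_sub hs ha.2.ne ht
  obtain ⟨h0, h1⟩ := (hy.2 t ht).1
  refine ⟨h0.lt_of_ne fun hzero => ?_, h1.lt_of_ne fun hone => ?_⟩
  · rw [← hzero, Real.zero_rpow (by linarith), sub_zero, mul_one] at h
    exact hK.ne' h.symm
  · rw [hone, Real.one_rpow, sub_self, mul_zero] at h
    exact one_ne_zero h

theorem F_eq_mul_exp (hs : 0 ≤ s) (ha : a ∈ Ioo 0 1) (hy : IsSolY s a y) (ht : t ∈ Ici 0) :
    F s (y t) = F s a * Real.exp (s * t) := by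
  rw [F, hy.rpow_eq_mul_one_sub hs ha.2.ne ht,
    mul_div_cancel_right₀ _ (sub_pos.2 (hy.mem_Ioo hs ha ht).2).ne']

theorem eqOn (hs : 0 ≤ s) (ha : a ∈ Ioo 0 1) {y₁ y₂ : ℝ → ℝ} (h₁ : IsSolY s a y₁)
    (h₂ : IsSolY s a y₂) : EqOn y₁ y₂ (Ici 0) := fun _ ht =>
  (strictMonoOn_F (s := s) (by linarith)).injOn (Ioo_subset_Ico_self (h₁.mem_Ioo hs ha ht))
    (Ioo_subset_Ico_self (h₂.mem_Ioo hs ha ht))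
    (by rw [h₁.F_eq_mul_exp hs ha ht, h₂.F_eq_mul_exp hs ha ht])

theorem strictMonoOn (hs : 0 < s) (ha : a ∈ Ioo 0 1) (hy : IsSolY s a y) :
    StrictMonoOn y (Ici 0) := fun _ ht _ hu htu => by
  refine ((strictMonoOn_F (s := s) (by linarith)).lt_iff_lt
    (Ioo_subset_Ico_self (hy.mem_Ioo hs.le ha ht))
    (Ioo_subset_Ico_self (hy.mem_Ioo hs.le ha hu))).1 ?_
  rw [hy.F_eq_mul_exp hs.le ha ht, hy.F_eq_mul_exp hs.le ha hu]
  have := F_pos (s := s) ha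
  gcongr

theorem tendsto_atTop (hs : 0 < s) (ha : a ∈ Ioo 0 1) (hy : IsSolY s a y) :
    Tendsto y atTop (𝓝 1) := by
  set g := fun t => F s a * Real.exp (s * t)
  have hg : Tendsto g atTop atTop :=
    (Real.tendsto_exp_atTop.comp (tendsto_id.const_mul_atTop hs)).const_mul_atTop (F_pos ha)
  have hlow : Tendsto (fun t => 1 - (g t)⁻¹) atTop (𝓝 1) := by
    simpa using tendsto_const_nhds.sub hg.inv_tendsto_atTop
  refine tendsto_of_tendsto_of_tendsto_of_le_of_le' hlow tendsto_const_nhds ?_ ?_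
  · filter_upwards [eventually_ge_atTop 0] with t ht
    obtain ⟨hy0, hy1⟩ := hy.mem_Ioo hs.le ha ht
    have hgt : 0 < g t := mul_pos (F_pos ha) (Real.exp_pos _)
    have : 1 - y t ≤ (g t)⁻¹ := by
      rw [← one_div, le_div_iff₀ hgt, mul_comm]
      exact hy.rpow_eq_mul_one_sub hs.le ha.2.ne ht ▸ Real.rpow_le_one hy0.le hy1.le (by linarith)
    linarith
  · filter_upwards [eventually_ge_atTop 0] with t ht using (hy.2 t ht).1.2

end IsSolY

theorem logistic_type_ode_unique_solution
    (s a : ℝ) (hs : 0 < s) (ha : a ∈ Set.Ioo (0 : ℝ) 1) :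
    (∃ y : ℝ → ℝ, IsSolY s a y) ∧
    (∀ y₁ y₂ : ℝ → ℝ, IsSolY s a y₁ → IsSolY s a y₂ → Set.EqOn y₁ y₂ (Set.Ici 0)) ∧
    (∀ y : ℝ → ℝ, IsSolY s a y →
      (∀ t ∈ Set.Ici (0 : ℝ), y t ∈ Set.Ioo (0 : ℝ) 1 ∧
        y t ^ (1 + s) / (1 - y t) = a ^ (1 + s) / (1 - a) * Real.exp (s * t)) ∧
      StrictMonoOn y (Set.Ici 0) ∧
      Tendsto y atTop (nhds 1)) :=
  ⟨LogisticODE.exists_isSolY (by linarith) ha,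
    fun _ _ h₁ h₂ => h₁.eqOn hs.le ha h₂,
    fun _ hy => ⟨fun _ ht => ⟨hy.mem_Ioo hs.le ha ht, hy.F_eq_mul_exp hs.le ha ht⟩,
      hy.strictMonoOn hs ha, hy.tendsto_atTop hs ha⟩⟩
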